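/- Let n ≥ 1 and let A = (a_{ij}) be a real n×n matrix satisfying the cyclic non-increasing condition. Define the n×n matrix M = (m_{ij}) by m_{ij} = a_{ij} − a_{i[j−1]}. Let D be the union of the open strongly connected components of the graph 𝒢(A), and suppose D is nonempty. Then the principal submatrix [M]_{DD} is semi-positive (there exists a vector z indexed by D with z > 0 componentwise and [M]_{DD} z > 0 componentwise) and, in particular, [M]_{DD} is invertible. -/

import Mathlib

/-!
The matrix `M` is a Z-matrix with zero row sums, and `m_{ij} < 0` exactly when `i → j` is an edge
of `𝒢(A)`. Every vertex reaches a terminal strongly connected class, which is closed, so from each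
vertex of `D` a path leads out of `D`. Hence `[M]_{DD}` is weakly chained diagonally dominant.
Such a Z-matrix is semipositive: a row with positive row sum is positive on the all-ones vector,
and a row `i` with `m_{ic} < 0` inherits this from row `c` by lowering the witness at `c`.
Semipositivity gives strict diagonal dominance after a positive column scaling, hence a nonzero
determinant.
-/

open Matrix BigOperators

/-- The cyclic non-increasing condition: each row of `A` weakly decreases
cyclically starting from the diagonal, i.e. `a_{i[j-1]} ≥ a_{ij}` for all
`j ≠ i` (indices in `Fin n`, arithmetic mod `n`). -/
def CyclicNonIncr {n : ℕ} [NeZero n] (A : Matrix (Fin n) (Fin n) ℝ) : Prop :=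
  ∀ i j : Fin n, j ≠ i → A i (j - 1) ≥ A i j

/-- The directed graph `𝒢(A)` has an edge from `i` to `j` iff `a_{i[j-1]} > a_{ij}`. -/
def GraphEdge {n : ℕ} [NeZero n] (A : Matrix (Fin n) (Fin n) ℝ) (i j : Fin n) : Prop :=
  A i (j - 1) > A i j

/-- `i` and `j` are strongly connected in `𝒢(A)`: there are directed paths
(possibly of length 0) from `i` to `j` and from `j` to `i`. -/
def Conn {n : ℕ} [NeZero n] (A : Matrix (Fin n) (Fin n) ℝ) (i j : Fin n) : Prop :=
  Relation.ReflTransGen (GraphEdge A) i j ∧ Relation.ReflTransGen (GraphEdge A) j i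

/-- `C` is a strongly connected component of `𝒢(A)`: an equivalence class of
the strong-connectivity relation. -/
def IsSCC {n : ℕ} [NeZero n] (A : Matrix (Fin n) (Fin n) ℝ) (C : Set (Fin n)) : Prop :=
  ∃ i, C = {j | Conn A i j}

/-- `C` is a closed SCC of `𝒢(A)`: an SCC with no edge leaving it. -/
def IsClosedSCC {n : ℕ} [NeZero n] (A : Matrix (Fin n) (Fin n) ℝ) (C : Set (Fin n)) : Prop :=
  IsSCC A C ∧ ∀ i ∈ C, ∀ j, GraphEdge A i j → j ∈ C

/-- `C` is an open SCC of `𝒢(A)`: an SCC with some edge leaving it. -/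
def IsOpenSCC {n : ℕ} [NeZero n] (A : Matrix (Fin n) (Fin n) ℝ) (C : Set (Fin n)) : Prop :=
  IsSCC A C ∧ ¬ (∀ i ∈ C, ∀ j, GraphEdge A i j → j ∈ C)


open Relation

section Reachability

variable {α : Type*} {r : α → α → Prop}

/-- Take a reachable point with the fewest reachable points. -/
theorem Relation.ReflTransGen.exists_terminal [Finite α] (a : α) :
    ∃ b, ReflTransGen r a b ∧ ∀ c, ReflTransGen r b c → ReflTransGen r c b := by
  have := Fintype.ofFinite α
  classical
  let reach : α → Finset α := fun x => {y | ReflTransGen r x y}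
  obtain ⟨b, hab, hmin⟩ := Finset.exists_min_image (reach a) (fun x => (reach x).card)
    ⟨a, by simp [reach, ReflTransGen.refl]⟩
  simp only [reach, Finset.mem_filter, Finset.mem_univ, true_and] at hab hmin
  refine ⟨b, hab, fun c hbc => ?_⟩
  by_contra hcb
  have hlt : (reach c).card < (reach b).card := by
    refine Finset.card_lt_card ⟨fun x hx => ?_, fun h => hcb ?_⟩
    · simp only [reach, Finset.mem_filter, Finset.mem_univ, true_and] at hx ⊢
      exact hbc.trans hx
    · simpa [reach] using h (by simp [reach, ReflTransGen.refl] : b ∈ reach b)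
  exact (hmin c (hab.trans hbc)).not_gt hlt

theorem Relation.ReflTransGen.exists_exit {p : α → Prop} {a b : α} (hab : ReflTransGen r a b)
    (ha : p a) (hb : ¬ p b) :
    ∃ c : Subtype p, ReflTransGen (fun x y : Subtype p => r x y) ⟨a, ha⟩ c ∧
      ∃ d, r c d ∧ ¬ p d := by
  induction hab using ReflTransGen.head_induction_on with
  | refl => exact absurd ha hb
  | @head a a' haa' _ ih =>
    by_cases ha' : p a'
    · obtain ⟨c, hc, hexit⟩ := ih ha'
      exact ⟨c, ReflTransGen.head haa' hc, hexit⟩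
    · exact ⟨⟨a, ha⟩, ReflTransGen.refl, a', haa', ha'⟩

end Reachability

namespace Matrix

variable {ι : Type*} [Fintype ι] {N : Matrix ι ι ℝ}

def IsSemipositiveRow (N : Matrix ι ι ℝ) (i : ι) : Prop :=
  ∃ z : ι → ℝ, (∀ j, 0 < z j) ∧ (∀ j, 0 ≤ (N *ᵥ z) j) ∧ 0 < (N *ᵥ z) i

theorem isSemipositiveRow_of_sum_pos (hrow : ∀ j, 0 ≤ ∑ k, N j k) {i : ι}
    (hi : 0 < ∑ k, N i k) : N.IsSemipositiveRow i :=
  ⟨fun _ => 1, fun _ => one_pos, fun j => by simpa [mulVec, dotProduct] using hrow j,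
    by simpa [mulVec, dotProduct] using hi⟩

/-- Scale the witness `z` for row `c` up and lower its `c`-th entry by one: this raises every
other row `j` by `-N j c ≥ 0`, and row `i` strictly. -/
theorem IsSemipositiveRow.of_neg_apply [DecidableEq ι] (hZ : ∀ i j, i ≠ j → N i j ≤ 0)
    {i c : ι} (hic : N i c < 0) (hc : N.IsSemipositiveRow c) : N.IsSemipositiveRow i := by
  obtain ⟨z, hz, hNz, hNzc⟩ := hc
  rcases eq_or_ne i c with rfl | hne
  · exact ⟨z, hz, hNz, hNzc⟩
  set α := max (1 / z c) (N c c / (N *ᵥ z) c) + 1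
  have hα₁ : 1 < α * z c :=
    (div_lt_iff₀ (hz c)).mp ((le_max_left _ _).trans_lt (lt_add_one _))
  have hα₂ : N c c < α * (N *ᵥ z) c :=
    (div_lt_iff₀ hNzc).mp ((le_max_right _ _).trans_lt (lt_add_one _))
  have hα : 0 < α := pos_of_mul_pos_left (one_pos.trans hα₁) (hz c).le
  have hNw : ∀ j, (N *ᵥ (α • z - Pi.single c 1)) j = α * (N *ᵥ z) j - N j c := by
    intro j
    simp [mulVec_sub, mulVec_smul]
  refine ⟨α • z - Pi.single c 1, fun j => ?_, fun j => ?_, ?_⟩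
  · rcases eq_or_ne j c with rfl | hjc
    · simpa using hα₁
    · simpa [hjc] using mul_pos hα (hz j)
  · rw [hNw]
    rcases eq_or_ne j c with rfl | hjc
    · linarith
    · nlinarith [hZ j c hjc, hNz j]
  · rw [hNw]
    nlinarith [hNz i]

/-- Weakly chained diagonally dominant Z-matrices are semipositive: semipositivity of a row
propagates backwards along negative entries, and the witnesses of all rows add up. -/
theorem exists_pos_mulVec_pos_of_chain (hZ : ∀ i j, i ≠ j → N i j ≤ 0)
    (hrow : ∀ i, 0 ≤ ∑ j, N i j)
    (hchain : ∀ i, ∃ j, ReflTransGen (fun a b => N a b < 0) i j ∧ 0 < ∑ k, N j k) :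
    ∃ z : ι → ℝ, (∀ i, 0 < z i) ∧ ∀ i, 0 < (N *ᵥ z) i := by
  classical
  have hsemi : ∀ i, N.IsSemipositiveRow i := by
    intro i
    obtain ⟨j, hij, hj⟩ := hchain i
    induction hij using ReflTransGen.head_induction_on with
    | refl => exact isSemipositiveRow_of_sum_pos hrow hj
    | head hac _ ih => exact ih.of_neg_apply hZ hac
  choose w hw hNw hNwi using hsemi
  refine ⟨∑ i, w i, fun j => ?_, fun j => ?_⟩
  · rw [Finset.sum_apply]
    exact Finset.sum_pos (fun i _ => hw i j) ⟨j, Finset.mem_univ j⟩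
  · rw [mulVec_sum, Finset.sum_apply]
    exact Finset.sum_pos' (fun i _ => hNw i j) ⟨j, Finset.mem_univ j, hNwi j⟩

/-- Scaling the columns by `z` makes `N` strictly diagonally dominant. -/
theorem det_ne_zero_of_mulVec_pos [DecidableEq ι] (hZ : ∀ i j, i ≠ j → N i j ≤ 0)
    {z : ι → ℝ} (hz : ∀ i, 0 < z i) (hNz : ∀ i, 0 < (N *ᵥ z) i) : N.det ≠ 0 := by
  have hdom :
      ∀ k, ∑ j ∈ Finset.univ.erase k, ‖(N * diagonal z) k j‖ < ‖(N * diagonal z) k k‖ := by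
    intro k
    have hsplit : (N *ᵥ z) k = N k k * z k + ∑ j ∈ Finset.univ.erase k, N k j * z j :=
      (Finset.add_sum_erase _ _ (Finset.mem_univ k)).symm
    have hoff : ∑ j ∈ Finset.univ.erase k, ‖N k j * z j‖ =
        -∑ j ∈ Finset.univ.erase k, N k j * z j := by
      rw [← Finset.sum_neg_distrib]
      refine Finset.sum_congr rfl fun j hj => ?_
      rw [Real.norm_of_nonpos (mul_nonpos_of_nonpos_of_nonneg
        (hZ k j (Finset.ne_of_mem_erase hj).symm) (hz j).le)]
    simp only [mul_diagonal, hoff]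
    linarith [hNz k, le_abs_self (N k k * z k), Real.norm_eq_abs (N k k * z k)]
  have := det_ne_zero_of_sum_row_lt_diag hdom
  rw [det_mul] at this
  exact left_ne_zero_of_mul this

/-- Along a principal submatrix the row sums can only grow, strictly so at a row with a negative
entry in a deleted column. -/
theorem exists_pos_submatrix_mulVec_pos {M : Matrix ι ι ℝ} (hZ : ∀ i j, i ≠ j → M i j ≤ 0)
    (hrow : ∀ i, 0 ≤ ∑ j, M i j) {D : Finset ι}
    (hD : ∀ i ∈ D, ∃ j ∉ D, ReflTransGen (fun a b => M a b < 0) i j) :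
    ∃ z : D → ℝ, (∀ i, 0 < z i) ∧
      ∀ i, 0 < (M.submatrix (fun i : D => (i : ι)) (fun j : D => (j : ι)) *ᵥ z) i := by
  classical
  have hrowD : ∀ i : D, ∑ j : D, M i j = ∑ j, M i j - ∑ j ∈ Dᶜ, M i j := fun i => by
    rw [← Finset.sum_add_sum_compl D, Finset.sum_coe_sort D (M i ·)]
    ring
  have hcompl : ∀ i : D, ∑ j ∈ Dᶜ, M i j ≤ 0 := fun i =>
    Finset.sum_nonpos fun j hj => hZ i j fun h => Finset.mem_compl.mp hj (h ▸ i.2)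
  refine exists_pos_mulVec_pos_of_chain (fun i j hij => hZ i j (Subtype.coe_injective.ne hij))
    (fun i => (hrowD i).symm ▸ by linarith [hrow i, hcompl i]) fun i => ?_
  obtain ⟨b, hbD, hib⟩ := hD i i.2
  obtain ⟨c, hic, d, hcd, hdD⟩ := hib.exists_exit (p := (· ∈ D)) i.2 hbD
  refine ⟨c, hic, ?_⟩
  have hlt : ∑ j ∈ Dᶜ, M c j < 0 :=
    Finset.sum_neg' (fun j hj => hZ c j fun h => Finset.mem_compl.mp hj (h ▸ c.2))
      ⟨d, Finset.mem_compl.mpr hdD, hcd⟩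
  simp only [submatrix_apply, hrowD]
  linarith [hrow c]

end Matrix

section CyclicDiff

variable {n : ℕ} [NeZero n]

def cyclicDiff (A : Matrix (Fin n) (Fin n) ℝ) : Matrix (Fin n) (Fin n) ℝ :=
  Matrix.of fun i j => A i j - A i (j - 1)

theorem CyclicNonIncr.cyclicDiff_nonpos {A : Matrix (Fin n) (Fin n) ℝ} (hA : CyclicNonIncr A)
    (i j : Fin n) (hij : i ≠ j) : cyclicDiff A i j ≤ 0 :=
  sub_nonpos.mpr (hA i j hij.symm)

theorem sum_cyclicDiff (A : Matrix (Fin n) (Fin n) ℝ) (i : Fin n) : ∑ j, cyclicDiff A i j = 0 := by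
  simp only [cyclicDiff, of_apply, Finset.sum_sub_distrib,
    Fintype.sum_equiv (Equiv.subRight (1 : Fin n)) (fun j => A i (j - 1)) (A i) fun _ => rfl,
    sub_self]

theorem cyclicDiff_neg_iff {A : Matrix (Fin n) (Fin n) ℝ} {i j : Fin n} :
    cyclicDiff A i j < 0 ↔ GraphEdge A i j :=
  sub_neg

theorem IsOpenSCC.notMem_of_terminal {A : Matrix (Fin n) (Fin n) ℝ} {C : Set (Fin n)}
    (hC : IsOpenSCC A C) {b : Fin n}
    (hb : ∀ c, ReflTransGen (GraphEdge A) b c → ReflTransGen (GraphEdge A) c b) : b ∉ C := by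
  obtain ⟨⟨i₀, rfl⟩, hopen⟩ := hC
  intro hbC
  push Not at hopen
  obtain ⟨p, hp, q, hpq, hq⟩ := hopen
  have hbq : ReflTransGen (GraphEdge A) b q := (hbC.2.trans hp.1).tail hpq
  exact hq ⟨hbC.1.trans hbq, (hb q hbq).trans hbC.2⟩

end CyclicDiff

theorem stmt_15_general (n : ℕ) [NeZero n] (A : Matrix (Fin n) (Fin n) ℝ)
    (hA : CyclicNonIncr A)
    (M : Matrix (Fin n) (Fin n) ℝ) (hM : ∀ i j, M i j = A i j - A i (j - 1))
    (D : Finset (Fin n))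
    (hD : (↑D : Set (Fin n)) = {i | ∃ C, IsOpenSCC A C ∧ i ∈ C}) :
    (∃ z : Fin n → ℝ, (∀ i ∈ D, 0 < z i) ∧ ∀ i ∈ D, 0 < ∑ j ∈ D, M i j * z j) ∧
    IsUnit (M.submatrix (fun i : {a // a ∈ D} => (i : Fin n))
      (fun j : {a // a ∈ D} => (j : Fin n))) := by
  obtain rfl : M = cyclicDiff A := Matrix.ext hM
  have hZ := hA.cyclicDiff_nonpos
  have hDmem {i} : i ∈ D ↔ ∃ C, IsOpenSCC A C ∧ i ∈ C := Set.ext_iff.mp hD i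
  have hreach : ∀ i ∈ D, ∃ j ∉ D, ReflTransGen (fun a b => cyclicDiff A a b < 0) i j := by
    intro i _
    obtain ⟨b, hib, hb⟩ := ReflTransGen.exists_terminal (r := GraphEdge A) i
    refine ⟨b, fun hbD => ?_, ReflTransGen.mono (fun _ _ => cyclicDiff_neg_iff.mpr) _ _ hib⟩
    obtain ⟨C', hC', hbC'⟩ := hDmem.mp hbD
    exact hC'.notMem_of_terminal hb hbC'
  obtain ⟨z, hz, hNz⟩ := Matrix.exists_pos_submatrix_mulVec_pos hZ
    (fun i => (sum_cyclicDiff A i).ge) hreach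
  have hZD : ∀ i j : D, i ≠ j → cyclicDiff A i j ≤ 0 := fun i j hij =>
    hZ i j (Subtype.coe_injective.ne hij)
  refine ⟨⟨fun i => if h : i ∈ D then z ⟨i, h⟩ else 0, fun i hi => by simpa [hi] using hz ⟨i, hi⟩,
    fun i hi => ?_⟩, (Matrix.isUnit_iff_isUnit_det _).mpr
      (Matrix.det_ne_zero_of_mulVec_pos hZD hz hNz).isUnit⟩
  convert hNz ⟨i, hi⟩ using 1
  rw [← Finset.sum_coe_sort D]
  simp [Matrix.mulVec, dotProduct]

theorem stmt_15 (n : ℕ) [NeZero n] (hn : 1 ≤ n) (A : Matrix (Fin n) (Fin n) ℝ)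
    (hA : CyclicNonIncr A)
    (M : Matrix (Fin n) (Fin n) ℝ) (hM : ∀ i j, M i j = A i j - A i (j - 1))
    (D : Finset (Fin n))
    (hD : (↑D : Set (Fin n)) = {i | ∃ C, IsOpenSCC A C ∧ i ∈ C})
    (hne : D.Nonempty) :
    (∃ z : Fin n → ℝ, (∀ i ∈ D, 0 < z i) ∧ ∀ i ∈ D, 0 < ∑ j ∈ D, M i j * z j) ∧
    IsUnit (M.submatrix (fun i : {a // a ∈ D} => (i : Fin n))
      (fun j : {a // a ∈ D} => (j : Fin n))) :=
  stmt_15_general n A hA M hM D hD
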